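/- arXiv:2210.02738 — 2 statements merged into one kernel-verified Lean document; each statement's English description precedes it below -/
import Mathlib

section
/- For every feasible point x of the relaxation (x ∈ [0,1]^n, ‖x‖₁ ≤ σ), there exists x′ ∈ [0,1]^n with Ax = Ax′, ‖x′‖₁ ≤ σ, and at most m entries of x′ are non-integral. -/
/-!
If more than `m` coordinates of a point `x ∈ [0,1]ⁿ` are fractional, the columns of `A` indexed by
them are linearly dependent, so there is a direction `d ≠ 0` in the kernel of `A`, supported on
those coordinates and with `∑ dᵢ ≤ 0`. Moving from `x` along `d` until the first coordinate
reaches `0` or `1` keeps `Ax` fixed, stays in `[0,1]ⁿ`, does not increase `∑ xᵢ = ‖x‖₁`, and makes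
at least one more coordinate integral. Iterating this at most `n` times gives `x'`.
-/

open scoped BigOperators Classical

def l1 {n : ℕ} (v : Fin n → ℝ) : ℝ := ∑ i, |v i|

open Set Matrix

lemma l1_eq_sum_of_nonneg {n : ℕ} {v : Fin n → ℝ} (hv : ∀ i, 0 ≤ v i) : l1 v = ∑ i, v i :=
  Finset.sum_congr rfl fun i _ => abs_of_nonneg (hv i)

section ExitTime

variable {a c t : ℝ}

noncomputable def exitTime (a c : ℝ) : ℝ := if 0 < c then (1 - a) / c else -a / c

lemma exitTime_pos (ha : a ∈ Ioo 0 1) (hc : c ≠ 0) : 0 < exitTime a c := by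
  obtain ⟨ha0, ha1⟩ := ha
  unfold exitTime
  split_ifs with hpos
  · exact div_pos (by linarith) hpos
  · exact div_pos_of_neg_of_neg (by linarith) (lt_of_le_of_ne (not_lt.mp hpos) hc)

lemma add_mul_mem_Icc (ha : a ∈ Icc 0 1) (ht0 : 0 ≤ t) (ht : t ≤ exitTime a c) :
    a + t * c ∈ Icc 0 1 := by
  obtain ⟨ha0, ha1⟩ := ha
  unfold exitTime at ht
  split_ifs at ht with hpos
  · have : t * c ≤ 1 - a := (le_div_iff₀ hpos).mp ht
    constructor <;> nlinarith
  · rcases (not_lt.mp hpos).lt_or_eq with hneg | rfl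
    · have : -a ≤ t * c := (le_div_iff_of_neg hneg).mp ht
      constructor <;> nlinarith
    · simpa using And.intro ha0 ha1

lemma add_exitTime_mul_mem (hc : c ≠ 0) : a + exitTime a c * c ∈ ({0, 1} : Set ℝ) := by
  unfold exitTime
  split_ifs
  · rw [div_mul_cancel₀ _ hc, mem_insert_iff, mem_singleton_iff]; right; ring
  · rw [div_mul_cancel₀ _ hc, mem_insert_iff]; left; ring

end ExitTime

section Fractional

variable {κ ι : Type*} [Fintype κ] [Fintype ι]

noncomputable def fractionalIndices (x : ι → ℝ) : Finset ι :=
  Finset.univ.filter (fun i => ¬ ∃ z : ℤ, x i = z)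

lemma mem_fractionalIndices {x : ι → ℝ} {i : ι} :
    i ∈ fractionalIndices x ↔ ¬ ∃ z : ℤ, x i = z := by
  simp [fractionalIndices]

lemma mem_Ioo_of_mem_fractionalIndices {x : ι → ℝ} {i : ι} (hx : x i ∈ Icc 0 1)
    (hi : i ∈ fractionalIndices x) : x i ∈ Ioo 0 1 := by
  rw [mem_fractionalIndices] at hi
  exact ⟨hx.1.lt_of_ne fun h => hi ⟨0, by simp [h]⟩, hx.2.lt_of_ne fun h => hi ⟨1, by simp [h]⟩⟩

lemma exists_mulVec_eq_zero_of_card_lt (A : Matrix κ ι ℝ) (s : Finset ι)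
    (hs : Fintype.card κ < s.card) :
    ∃ d : ι → ℝ, d ≠ 0 ∧ A *ᵥ d = 0 ∧ (∀ i ∉ s, d i = 0) ∧ ∑ i, d i ≤ 0 := by
  let f := A.mulVecLin.prod (LinearMap.funLeft ℝ ℝ (Subtype.val : {i // i ∉ s} → ι))
  have hker : LinearMap.ker f ≠ ⊥ := LinearMap.ker_ne_bot_of_finrank_lt <| by
    simp only [Module.finrank_prod, Module.finrank_fintype_fun_eq_card,
      Fintype.card_subtype_compl, Fintype.card_coe]
    have := s.card_le_univ
    omega
  obtain ⟨d, hd, hd0⟩ := (Submodule.ne_bot_iff _).mp hker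
  have hAd : A *ᵥ d = 0 := congrArg Prod.fst hd
  have hds : ∀ i ∉ s, d i = 0 := fun i hi => congrFun (congrArg Prod.snd hd) ⟨i, hi⟩
  rcases le_or_gt (∑ i, d i) 0 with hsum | hsum
  · exact ⟨d, hd0, hAd, hds, hsum⟩
  · refine ⟨-d, neg_ne_zero.mpr hd0, by rw [mulVec_neg, hAd, neg_zero],
      fun i hi => by simp [hds i hi], ?_⟩
    simp only [Pi.neg_apply, Finset.sum_neg_distrib]
    linarith

lemma exists_step_fractionalIndices_ssubset {x d : ι → ℝ} (hx : ∀ i, x i ∈ Icc 0 1)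
    (hd : d ≠ 0) (hds : ∀ i ∉ fractionalIndices x, d i = 0) :
    ∃ t : ℝ, 0 ≤ t ∧ (∀ i, (x + t • d) i ∈ Icc 0 1) ∧
      fractionalIndices (x + t • d) ⊂ fractionalIndices x := by
  have hfrac : ∀ i, d i ≠ 0 → i ∈ fractionalIndices x := fun i hi => by
    by_contra h; exact hi (hds i h)
  let S := Finset.univ.filter fun i => d i ≠ 0
  have hS : S.Nonempty := by
    obtain ⟨i, hi⟩ := Function.ne_iff.mp hd
    exact ⟨i, by simpa [S] using hi⟩
  -- the first time at which some coordinate moving along `d` reaches `0` or `1`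
  obtain ⟨i₀, hi₀S, ht⟩ := Finset.exists_mem_eq_inf' hS fun i => exitTime (x i) (d i)
  set t := S.inf' hS fun i => exitTime (x i) (d i)
  have hdi₀ : d i₀ ≠ 0 := (Finset.mem_filter.mp hi₀S).2
  have ht0 : 0 ≤ t := ht ▸ (exitTime_pos
    (mem_Ioo_of_mem_fractionalIndices (hx i₀) (hfrac i₀ hdi₀)) hdi₀).le
  refine ⟨t, ht0, fun i => ?_, ?_⟩
  · by_cases hdi : d i = 0
    · simpa [hdi] using hx i
    · exact add_mul_mem_Icc (hx i) ht0 (Finset.inf'_le _ (by simpa [S] using hdi))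
  · have hsub : fractionalIndices (x + t • d) ⊆ fractionalIndices x := fun i hi => by
      by_cases hdi : d i = 0
      · simpa [mem_fractionalIndices, hdi] using hi
      · exact hfrac i hdi
    refine (Finset.ssubset_iff_of_subset hsub).mpr ⟨i₀, hfrac i₀ hdi₀, ?_⟩
    rw [mem_fractionalIndices, not_not]
    rcases ht ▸ add_exitTime_mul_mem (a := x i₀) hdi₀ with h | h
    · exact ⟨0, by simpa using h⟩
    · exact ⟨1, by simpa using h⟩

theorem exists_card_fractionalIndices_le (A : Matrix κ ι ℝ) {x : ι → ℝ}
    (hx : ∀ i, x i ∈ Icc 0 1) :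
    ∃ y : ι → ℝ, (∀ i, y i ∈ Icc 0 1) ∧ A *ᵥ y = A *ᵥ x ∧ ∑ i, y i ≤ ∑ i, x i ∧
      (fractionalIndices y).card ≤ Fintype.card κ := by
  induction hk : (fractionalIndices x).card using Nat.strong_induction_on generalizing x with
  | _ k ih =>
    by_cases hsmall : k ≤ Fintype.card κ
    · exact ⟨x, hx, rfl, le_rfl, hk ▸ hsmall⟩
    obtain ⟨d, hd, hAd, hds, hsum⟩ :=
      exists_mulVec_eq_zero_of_card_lt A (fractionalIndices x) (by omega)
    obtain ⟨t, ht0, hy, hlt⟩ := exists_step_fractionalIndices_ssubset hx hd hds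
    obtain ⟨z, hz, hAz, hzsum, hzcard⟩ := ih _ (hk ▸ Finset.card_lt_card hlt) hy rfl
    refine ⟨z, hz, by rw [hAz, mulVec_add, mulVec_smul, hAd, smul_zero, add_zero], ?_, hzcard⟩
    calc ∑ i, z i ≤ ∑ i, (x + t • d) i := hzsum
      _ = ∑ i, x i + t * ∑ i, d i := by
        simp only [Pi.add_apply, Pi.smul_apply, smul_eq_mul, Finset.sum_add_distrib,
          Finset.mul_sum]
      _ ≤ ∑ i, x i := by nlinarith

end Fractional

theorem few_fractional_l1_general (m n : ℕ) (A : Matrix (Fin m) (Fin n) ℤ)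
    (σ : ℕ) (x : Fin n → ℝ)
    (hx01 : ∀ i, 0 ≤ x i ∧ x i ≤ 1) (hx1 : l1 x ≤ σ) :
    ∃ x' : Fin n → ℝ, (∀ i, 0 ≤ x' i ∧ x' i ≤ 1) ∧ l1 x' ≤ σ ∧
      (∀ r : Fin m, ∑ j, (A r j : ℝ) * x' j = ∑ j, (A r j : ℝ) * x j) ∧
      (Finset.univ.filter (fun i => ¬ ∃ z : ℤ, x' i = z)).card ≤ m := by
  obtain ⟨y, hy, hAy, hsum, hcard⟩ := exists_card_fractionalIndices_le (A.map (↑)) hx01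
  refine ⟨y, hy, ?_, fun r => congrFun hAy r, hcard.trans_eq (Fintype.card_fin m)⟩
  rw [l1_eq_sum_of_nonneg fun i => (hy i).1]
  rw [l1_eq_sum_of_nonneg fun i => (hx01 i).1] at hx1
  linarith

/-- every feasible point of the ℓ₁-relaxation has an equivalent
feasible point (same image under A) with at most m non-integral entries. -/
theorem few_fractional_l1 (m n : ℕ) (A : Matrix (Fin m) (Fin n) ℤ)
    (σ : ℕ) (hσ : 1 ≤ σ) (x : Fin n → ℝ)
    (hx01 : ∀ i, 0 ≤ x i ∧ x i ≤ 1) (hx1 : l1 x ≤ σ) :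
    ∃ x' : Fin n → ℝ, (∀ i, 0 ≤ x' i ∧ x' i ≤ 1) ∧ l1 x' ≤ σ ∧
      (∀ r : Fin m, ∑ j, (A r j : ℝ) * x' j = ∑ j, (A r j : ℝ) * x j) ∧
      (Finset.univ.filter (fun i => ¬ ∃ z : ℤ, x' i = z)).card ≤ m :=
  few_fractional_l1_general m n A σ x hx01 hx1
end

section
/- Let Q = {Ax : x ∈ [0,1]^n, ‖x‖₁ ≤ σ} and σ ≥ m an integer. If b ∈ ((σ−m+1)/σ)·Q, then there exists x⋆ ∈ [0,1]^n with ‖x⋆‖₀ ≤ σ and Ax⋆ = b. -/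
open scoped BigOperators Classical Pointwise

noncomputable def l0 {n : ℕ} (v : Fin n → ℝ) : ℕ :=
  (Finset.univ.filter (fun i => v i ≠ 0)).card

/-! Scaling a representation of `b / c`, `c = (σ - m + 1) / σ`, by `c` gives a point `x ∈ [0,1]ⁿ`
with `A x = b` and coordinate sum at most `σ - m + 1`. While more than `m` coordinates of `x` are
fractional, the corresponding columns of `A` are dependent, and moving `x` along a kernel direction
of nonpositive sum until some coordinate hits `0` or `1` removes a fractional coordinate without
changing `A x` or raising the sum. In the end at most `m` coordinates are fractional; if there are
any, they contribute a positive amount to the sum, so at most `σ - m` coordinates equal `1`. -/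

open Finset Matrix

noncomputable def exitTimeIcc (a w : ℝ) : ℝ :=
  if 0 < w then (1 - a) / w else -a / w

lemma exitTimeIcc_nonneg {a : ℝ} (ha : a ∈ Set.Icc 0 1) (w : ℝ) : 0 ≤ exitTimeIcc a w := by
  unfold exitTimeIcc
  split_ifs with hw
  · exact div_nonneg (by linarith [ha.2]) hw.le
  · exact div_nonneg_of_nonpos (by linarith [ha.1]) (not_lt.mp hw)

lemma add_mul_mem_Icc_of_le_exitTimeIcc {a w t : ℝ} (ha : a ∈ Set.Icc 0 1) (ht₀ : 0 ≤ t)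
    (ht : t ≤ exitTimeIcc a w) : a + t * w ∈ Set.Icc 0 1 := by
  obtain ⟨ha₀, ha₁⟩ := ha
  rcases lt_trichotomy w 0 with hw | rfl | hw
  · rw [exitTimeIcc, if_neg hw.not_gt, le_div_iff_of_neg hw] at ht
    constructor <;> nlinarith
  · simpa using ⟨ha₀, ha₁⟩
  · rw [exitTimeIcc, if_pos hw, le_div_iff₀ hw] at ht
    constructor <;> nlinarith

lemma add_exitTimeIcc_mul_eq_zero_or_one (a : ℝ) {w : ℝ} (hw : w ≠ 0) :
    a + exitTimeIcc a w * w = 0 ∨ a + exitTimeIcc a w * w = 1 := by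
  unfold exitTimeIcc
  split_ifs
  · right; field_simp; ring
  · left; field_simp; ring

variable {ι κ : Type*} [Fintype ι] [Fintype κ]

lemma exists_add_mul_mem_cube_eq_zero_or_one {x w : ι → ℝ} (hx : ∀ i, x i ∈ Set.Icc 0 1)
    (hw : w ≠ 0) :
    ∃ t, 0 ≤ t ∧ (∀ i, x i + t * w i ∈ Set.Icc 0 1) ∧
      ∃ i, w i ≠ 0 ∧ (x i + t * w i = 0 ∨ x i + t * w i = 1) := by
  have hS : ({i | w i ≠ 0} : Finset ι).Nonempty := by
    obtain ⟨i, hi⟩ := Function.ne_iff.mp hw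
    exact ⟨i, by simpa using hi⟩
  obtain ⟨i₀, hi₀, hmin⟩ := exists_min_image _ (fun j => exitTimeIcc (x j) (w j)) hS
  rw [mem_filter_univ] at hi₀
  refine ⟨exitTimeIcc (x i₀) (w i₀), exitTimeIcc_nonneg (hx i₀) _, fun j => ?_, i₀, hi₀,
    add_exitTimeIcc_mul_eq_zero_or_one _ hi₀⟩
  by_cases hj : w j = 0
  · simpa [hj] using hx j
  · exact add_mul_mem_Icc_of_le_exitTimeIcc (hx j) (exitTimeIcc_nonneg (hx i₀) _)
      (hmin j ((mem_filter_univ j).mpr hj))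

lemma Matrix.exists_ne_zero_mulVec_eq_zero_of_card_lt {K : Type*} [Field K] (A : Matrix κ ι K)
    {F : Finset ι} (hF : Fintype.card κ < #F) :
    ∃ z : ι → K, z ≠ 0 ∧ (∀ j ∉ F, z j = 0) ∧ A *ᵥ z = 0 := by
  let e := Function.ExtendByZero.linearMap K ((↑) : F → ι)
  have hker : LinearMap.ker (A.mulVecLin ∘ₗ e) ≠ ⊥ :=
    LinearMap.ker_ne_bot_of_finrank_lt (by simpa using hF)
  obtain ⟨v, hv, hv0⟩ := (Submodule.ne_bot_iff _).mp hker
  refine ⟨e v, fun h => hv0 ?_, fun j hj => ?_, hv⟩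
  · ext j
    simpa [e, Subtype.val_injective.extend_apply] using congrFun h j
  · exact Function.extend_apply' _ _ _ (by simpa using hj)

noncomputable def fractionalSupport (x : ι → ℝ) : Finset ι :=
  {i | x i ≠ 0 ∧ x i ≠ 1}

lemma exists_fractionalSupport_ssubset (A : Matrix κ ι ℝ) {x : ι → ℝ}
    (hx : ∀ i, x i ∈ Set.Icc 0 1) (hcard : Fintype.card κ < #(fractionalSupport x)) :
    ∃ x', (∀ i, x' i ∈ Set.Icc 0 1) ∧ ∑ i, x' i ≤ ∑ i, x i ∧ A *ᵥ x' = A *ᵥ x ∧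
      fractionalSupport x' ⊂ fractionalSupport x := by
  obtain ⟨z, hz, hzF, hAz⟩ := A.exists_ne_zero_mulVec_eq_zero_of_card_lt hcard
  obtain ⟨w, hw, hwF, hAw, hw_sum⟩ : ∃ w : ι → ℝ, w ≠ 0 ∧
      (∀ j ∉ fractionalSupport x, w j = 0) ∧ A *ᵥ w = 0 ∧ ∑ i, w i ≤ 0 := by
    rcases le_total (∑ i, z i) 0 with h | h
    · exact ⟨z, hz, hzF, hAz, h⟩
    · refine ⟨-z, neg_ne_zero.mpr hz, fun j hj => by simp [hzF j hj],
        by rw [mulVec_neg, hAz, neg_zero], by simpa using h⟩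
  obtain ⟨t, ht, hxt, i₀, hwi₀, hi₀⟩ := exists_add_mul_mem_cube_eq_zero_or_one hx hw
  have hsupp : ∀ j, j ∉ fractionalSupport x → x j + t * w j = x j := fun j hj => by
    simp [hwF j hj]
  refine ⟨x + t • w, hxt, ?_, ?_, ?_⟩
  · simp only [Pi.add_apply, Pi.smul_apply, smul_eq_mul, sum_add_distrib, ← mul_sum]
    linarith [mul_nonpos_of_nonneg_of_nonpos ht hw_sum]
  · rw [mulVec_add, mulVec_smul, hAw, smul_zero, add_zero]
  · refine ssubset_iff_of_subset (fun j hj => ?_) |>.mpr ⟨i₀, ?_, ?_⟩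
    · by_contra hjx
      simp only [fractionalSupport, mem_filter_univ, Pi.add_apply, Pi.smul_apply, smul_eq_mul,
        hsupp j hjx] at hj hjx
      exact hjx hj
    · by_contra h
      exact hwi₀ (hwF i₀ h)
    · simp only [fractionalSupport, mem_filter_univ, Pi.add_apply, Pi.smul_apply, smul_eq_mul]
      tauto

theorem exists_card_fractionalSupport_le (A : Matrix κ ι ℝ) {x : ι → ℝ}
    (hx : ∀ i, x i ∈ Set.Icc 0 1) :
    ∃ x', (∀ i, x' i ∈ Set.Icc 0 1) ∧ ∑ i, x' i ≤ ∑ i, x i ∧ A *ᵥ x' = A *ᵥ x ∧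
      #(fractionalSupport x') ≤ Fintype.card κ := by
  induction hN : #(fractionalSupport x) using Nat.strong_induction_on generalizing x with
  | _ N ih =>
    by_cases hle : N ≤ Fintype.card κ
    · exact ⟨x, hx, le_rfl, rfl, hN ▸ hle⟩
    obtain ⟨x', hx', hsum, hA, hss⟩ := exists_fractionalSupport_ssubset A hx (by omega)
    obtain ⟨x'', hx'', hsum', hA', hcard⟩ := ih _ (hN ▸ card_lt_card hss) hx' rfl
    exact ⟨x'', hx'', hsum'.trans hsum, hA'.trans hA, hcard⟩

lemma sum_eq_card_add_sum_fractionalSupport (x : ι → ℝ) :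
    ∑ i, x i = #{i | x i = 1} + ∑ i ∈ fractionalSupport x, x i := by
  rw [← sum_filter_add_sum_filter_not univ (fun i => x i = 1)]
  congr 1
  · rw [sum_congr rfl (g := fun _ => 1) fun i hi => (mem_filter_univ i).mp hi]
    simp
  · rw [fractionalSupport, ← sum_filter_ne_zero, filter_filter]
    simp_rw [and_comm]

lemma l0_le_add_max_card_fractionalSupport {n : ℕ} {x : Fin n → ℝ}
    (hx : ∀ i, x i ∈ Set.Icc 0 1) {k : ℕ} (hsum : ∑ i, x i ≤ k + 1) :
    l0 x ≤ k + max 1 #(fractionalSupport x) := by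
  have hl0 : l0 x ≤ #{i | x i = 1} + #(fractionalSupport x) := by
    refine (card_le_card fun i hi => ?_).trans (card_union_le _ _)
    simp only [mem_filter_univ] at hi
    by_cases h : x i = 1 <;> simp [fractionalSupport, hi, h]
  rw [sum_eq_card_add_sum_fractionalSupport] at hsum
  rcases (fractionalSupport x).eq_empty_or_nonempty with h | h
  · simp only [h, sum_empty, add_zero, card_empty] at hsum hl0
    have : #{i | x i = 1} ≤ k + 1 := by exact_mod_cast hsum
    omega
  · have hpos : 0 < ∑ i ∈ fractionalSupport x, x i := sum_pos (fun i hi => by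
      simp only [fractionalSupport, mem_filter_univ] at hi
      exact lt_of_le_of_ne (hx i).1 (Ne.symm hi.1)) h
    have : #{i | x i = 1} < k + 1 := by exact_mod_cast (lt_add_of_pos_right _ hpos).trans_le hsum
    omega

/-- if `b ∈ ((σ−m+1)/σ)·Q` where
`Q = {Ax : x ∈ [0,1]^n, ‖x‖₁ ≤ σ}` and `σ ≥ m ≥ 1`, then `b = Ax⋆` for some
`x⋆ ∈ [0,1]^n` with `‖x⋆‖₀ ≤ σ`. -/
theorem exact_representation_deep_inside (m n : ℕ) (hm : 1 ≤ m)
    (A : Matrix (Fin m) (Fin n) ℝ) (σ : ℕ) (hσ : m ≤ σ) (b : Fin m → ℝ)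
    (hb : b ∈ ((σ - m + 1 : ℝ) / σ) •
      {y : Fin m → ℝ | ∃ x : Fin n → ℝ,
        (∀ i, 0 ≤ x i ∧ x i ≤ 1) ∧ (∑ i, x i) ≤ σ ∧ y = A.mulVec x}) :
    ∃ x : Fin n → ℝ, (∀ i, 0 ≤ x i ∧ x i ≤ 1) ∧ l0 x ≤ σ ∧ A.mulVec x = b := by
  obtain ⟨_, ⟨x, hx, hsum, rfl⟩, rfl⟩ := hb
  set c : ℝ := (σ - m + 1) / σ
  have hσ₀ : (0 : ℝ) < σ := Nat.cast_pos.mpr (hm.trans hσ)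
  have hcσ : c * σ = (σ - m : ℕ) + 1 := by
    rw [Nat.cast_sub hσ, div_mul_cancel₀ _ hσ₀.ne']
  have hc : c ∈ Set.Icc 0 1 := by
    have hmσ : (m : ℝ) ≤ σ := by exact_mod_cast hσ
    have hm₁ : (1 : ℝ) ≤ m := by exact_mod_cast hm
    exact ⟨div_nonneg (by linarith) hσ₀.le, (div_le_one hσ₀).mpr (by linarith)⟩
  obtain ⟨x', hx', hsum', hA', hcard⟩ := exists_card_fractionalSupport_le A (x := c • x)
    fun i => ⟨mul_nonneg hc.1 (hx i).1, mul_le_one₀ hc.2 (hx i).1 (hx i).2⟩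
  refine ⟨x', hx', ?_, by rw [hA', mulVec_smul]⟩
  have := l0_le_add_max_card_fractionalSupport hx' (k := σ - m) <| calc
    ∑ i, x' i ≤ ∑ i, c * x i := hsum'
    _ = c * ∑ i, x i := (mul_sum ..).symm
    _ ≤ c * σ := mul_le_mul_of_nonneg_left hsum hc.1
    _ = _ := hcσ
  simp only [Fintype.card_fin] at hcard
  omega
end
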